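/- Let ω > 0, T = 2π/ω, and let A be an m×m complex matrix with filtered propagator S_A := (2/T) ∫₀^T (cos(ωt) − 1/4)·exp(tA) dt. Then every eigenvalue of S_A is of the form β(λ) for some eigenvalue λ of A; that is, the spectrum of S_A is contained in the image of the spectrum of A under the filter-transfer function β. -/

import Mathlib

open Complex intervalIntegral

/-- The filter-transfer function
`β(λ) = (2/T) ∫₀^T (cos(ωt) − 1/4) e^{λt} dt` with `T = 2π/ω`. -/
noncomputable def filterBeta (ω : ℝ) (lam : ℂ) : ℂ :=
  (2 / ((2 * Real.pi / ω : ℝ) : ℂ)) *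
    ∫ t in (0:ℝ)..(2 * Real.pi / ω), ((Real.cos (ω * t) : ℂ) - 1/4) * Complex.exp (lam * t)

/-- The filtered propagator `S_A = (2/T) ∫₀^T (cos(ωt) − 1/4) exp(tA) dt`, the integral
taken entrywise, with `T = 2π/ω`. -/
noncomputable def filteredPropagator {m : ℕ} (ω : ℝ) (A : Matrix (Fin m) (Fin m) ℂ) :
    Matrix (Fin m) (Fin m) ℂ :=
  Matrix.of fun i j =>
    (2 / ((2 * Real.pi / ω : ℝ) : ℂ)) *
      ∫ t in (0:ℝ)..(2 * Real.pi / ω),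
        ((Real.cos (ω * t) : ℂ) - 1/4) * (NormedSpace.exp ((t : ℂ) • A) i j)

/-! Since `S_A` commutes with `A`, every eigenspace of `S_A` is `A`-invariant and therefore
contains an eigenvector `v` of `A`, say `A v = μ v`. On such a vector `exp (t A) v = e^{μ t} v`,
so integrating against the filter weight gives `S_A v = β(μ) v`. -/

namespace Module.End

variable {K V : Type*} [Field K] [IsAlgClosed K] [AddCommGroup V] [Module K V]
  [FiniteDimensional K V]

theorem HasEigenvalue.exists_hasEigenvector_of_commute {f g : End K V} (hfg : Commute f g)
    {lam : K} (hlam : f.HasEigenvalue lam) :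
    ∃ v μ, f.HasEigenvector lam v ∧ g.HasEigenvector μ v := by
  have hmaps : ∀ x ∈ f.eigenspace lam, g x ∈ f.eigenspace lam := fun x hx =>
    mapsTo_genEigenspace_of_comm hfg lam 1 hx
  have : Nontrivial (f.eigenspace lam) := Submodule.nontrivial_iff_ne_bot.mpr hlam
  obtain ⟨μ, hμ⟩ := exists_eigenvalue (g.restrict hmaps)
  obtain ⟨w, hw⟩ := hμ.exists_hasEigenvector
  have hw0 : (w : V) ≠ 0 := by simpa using hw.2
  exact ⟨w, μ, ⟨w.2, hw0⟩,
    eigenspace_restrict_le_eigenspace g hmaps μ ⟨w, hw.1, rfl⟩, hw0⟩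

end Module.End

namespace Matrix

variable {n : Type*} [Fintype n]

theorem of_intervalIntegral_mulVec {F : ℝ → Matrix n n ℂ} {a b : ℝ} (hF : Continuous F)
    (v : n → ℂ) :
    (of fun i j => ∫ t in a..b, F t i j) *ᵥ v = ∫ t in a..b, F t *ᵥ v := by
  funext i
  have hFv : Continuous fun t => F t *ᵥ v := hF.matrix_mulVec continuous_const
  have hcoord : (∫ t in a..b, F t *ᵥ v) i = ∫ t in a..b, (F t *ᵥ v) i :=
    ((ContinuousLinearMap.proj (R := ℂ) i).intervalIntegral_comp_comm
      (hFv.intervalIntegrable a b)).symm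
  rw [hcoord]
  simp only [mulVec, dotProduct, of_apply]
  rw [intervalIntegral.integral_finsetSum (f := fun j t => F t i j * v j) fun j _ =>
    ((hF.matrix_elem i j).mul continuous_const).intervalIntegrable a b]
  simp only [intervalIntegral.integral_mul_const]

variable [DecidableEq n]

theorem exp_mulVec_of_mulVec_eq_smul {A : Matrix n n ℂ} {v : n → ℂ} {μ : ℂ}
    (hv : A *ᵥ v = μ • v) : NormedSpace.exp A *ᵥ v = Complex.exp μ • v := by
  -- the square matrix all of whose columns are `v` intertwines `μ` and `A`
  have hsemiconj : SemiconjBy (replicateCol n v) (algebraMap ℂ _ μ) A := by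
    rw [SemiconjBy, ← replicateCol_mulVec, hv, Algebra.algebraMap_eq_smul_one, mul_smul_one,
      replicateCol_smul]
  have hexp : SemiconjBy (replicateCol n v) (algebraMap ℂ _ (Complex.exp μ))
      (NormedSpace.exp A) := by
    open scoped Norms.Operator in
    rw [Complex.exp_eq_exp_ℂ, NormedSpace.algebraMap_exp_comm]
    exact hsemiconj.exp_right
  rw [SemiconjBy, Algebra.algebraMap_eq_smul_one, mul_smul_one, ← replicateCol_mulVec,
    ← replicateCol_smul] at hexp
  funext i
  exact (congrFun (congrFun hexp i) i).symm

theorem continuous_exp_smul (A : Matrix n n ℂ) :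
    Continuous fun t : ℝ => NormedSpace.exp ((t : ℂ) • A) := by
  open scoped Norms.Operator in
  exact NormedSpace.exp_continuous.comp (continuous_ofReal.smul continuous_const)

end Matrix

section FilteredPropagator

open Matrix

variable {m : ℕ} (ω : ℝ) (A : Matrix (Fin m) (Fin m) ℂ)

theorem filteredPropagator_mulVec (v : Fin m → ℂ) :
    filteredPropagator ω A *ᵥ v = (2 / ((2 * Real.pi / ω : ℝ) : ℂ)) •
      ∫ t in (0:ℝ)..(2 * Real.pi / ω),
        ((Real.cos (ω * t) : ℂ) - 1/4) • (NormedSpace.exp ((t : ℂ) • A) *ᵥ v) := by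
  have hF : Continuous fun t : ℝ =>
      ((Real.cos (ω * t) : ℂ) - 1/4) • NormedSpace.exp ((t : ℂ) • A) := by
    have := A.continuous_exp_smul
    fun_prop
  have hS : filteredPropagator ω A = (2 / ((2 * Real.pi / ω : ℝ) : ℂ)) • of fun i j =>
      ∫ t in (0:ℝ)..(2 * Real.pi / ω),
        (((Real.cos (ω * t) : ℂ) - 1/4) • NormedSpace.exp ((t : ℂ) • A)) i j := by
    ext i j
    simp [filteredPropagator]
  simp_rw [hS, smul_mulVec, of_intervalIntegral_mulVec hF, smul_mulVec]

theorem filteredPropagator_mulVec_of_mulVec_eq_smul {v : Fin m → ℂ} {μ : ℂ}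
    (hv : A *ᵥ v = μ • v) : filteredPropagator ω A *ᵥ v = filterBeta ω μ • v := by
  have hexp (t : ℝ) : NormedSpace.exp ((t : ℂ) • A) *ᵥ v = Complex.exp (μ * t) • v :=
    exp_mulVec_of_mulVec_eq_smul (by rw [smul_mulVec, hv, smul_smul, mul_comm])
  simp only [filteredPropagator_mulVec, hexp, smul_smul, intervalIntegral.integral_smul_const,
    filterBeta]

theorem commute_filteredPropagator : Commute A (filteredPropagator ω A) := by
  have hexp_comm (t : ℝ) (v : Fin m → ℂ) : NormedSpace.exp ((t : ℂ) • A) *ᵥ (A *ᵥ v) =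
      A *ᵥ (NormedSpace.exp ((t : ℂ) • A) *ᵥ v) := by
    rw [mulVec_mulVec, mulVec_mulVec, ((Commute.refl A).smul_right (t : ℂ)).exp_right.eq]
  refine ext_iff_mulVec.mpr fun v => ?_
  have hint : IntervalIntegrable (fun t : ℝ =>
      ((Real.cos (ω * t) : ℂ) - 1/4) • (NormedSpace.exp ((t : ℂ) • A) *ᵥ v))
      MeasureTheory.volume 0 (2 * Real.pi / ω) := by
    have := A.continuous_exp_smul
    exact Continuous.intervalIntegrable (by fun_prop) _ _
  have hA_integral := (mulVecLin A).toContinuousLinearMap.intervalIntegral_comp_comm hint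
  simp only [LinearMap.coe_toContinuousLinearMap', mulVecLin_apply, mulVec_smul] at hA_integral
  rw [← mulVec_mulVec, ← mulVec_mulVec, filteredPropagator_mulVec, filteredPropagator_mulVec,
    mulVec_smul, ← hA_integral]
  simp_rw [hexp_comm]

end FilteredPropagator

theorem spectrum_filteredPropagator_subset_general {m : ℕ} (ω : ℝ)
    (A : Matrix (Fin m) (Fin m) ℂ) :
    spectrum ℂ (filteredPropagator ω A) ⊆ (filterBeta ω) '' (spectrum ℂ A) := by
  intro lam hlam
  rw [← AlgEquiv.spectrum_eq Matrix.toLinAlgEquiv'] at hlam ⊢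
  obtain ⟨v, μ, hSv, hAv⟩ :=
    (Module.End.HasEigenvalue.of_mem_spectrum hlam).exists_hasEigenvector_of_commute
      ((commute_filteredPropagator ω A).symm.map Matrix.toLinAlgEquiv')
  refine ⟨μ, (Module.End.hasEigenvalue_of_hasEigenvector hAv).mem_spectrum,
    smul_left_injective ℂ hSv.2 ?_⟩
  change filterBeta ω μ • v = lam • v
  rw [← hSv.apply_eq_smul, Matrix.toLinAlgEquiv'_apply,
    filteredPropagator_mulVec_of_mulVec_eq_smul ω A hAv.apply_eq_smul]

theorem spectrum_filteredPropagator_subset {m : ℕ} (ω : ℝ) (hω : 0 < ω)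
    (A : Matrix (Fin m) (Fin m) ℂ) :
    spectrum ℂ (filteredPropagator ω A) ⊆ (filterBeta ω) '' (spectrum ℂ A) :=
  spectrum_filteredPropagator_subset_general ω A
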